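/- arXiv:1909.05034 — 3 statements merged into one kernel-verified Lean document; each statement's English description precedes it below -/
import Mathlib

section
/- Let C > 0 and (a_k) a sequence of nonnegative reals with C·a_0 ≥ 1, satisfying a_{k+1} ≤ a_k · min_{λ∈[0,1]} (|1−λ| + λ² C a_k) for all k. Then for every k with C·a_k ≥ 1 one has a_{k+1} ≤ (1 − 1/(4 C a_0)) · a_k; consequently the set {k : C·a_k ≥ 1} is finite and a_k → 0 as k → ∞. -/
open Filter

/-- Linear-decay phase of Lemma 2.17: if `C * a 0 ≥ 1` and the sequence satisfies
`a (k+1) ≤ a k * (|1-λ| + λ² C a k)` for all `λ ∈ [0,1]`, then whenever `C * a k ≥ 1`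
one has `a (k+1) ≤ (1 - 1/(4 C a 0)) * a k`; the set `{k | C * a k ≥ 1}` is finite and
`a k → 0`. -/
theorem stmt1 (C : ℝ) (hC : 0 < C) (a : ℕ → ℝ) (ha : ∀ k, 0 ≤ a k)
    (hrec : ∀ k, ∀ lam ∈ Set.Icc (0 : ℝ) 1,
      a (k + 1) ≤ a k * (|1 - lam| + lam ^ 2 * C * a k))
    (h0 : 1 ≤ C * a 0) :
    (∀ k, 1 ≤ C * a k → a (k + 1) ≤ (1 - 1 / (4 * C * a 0)) * a k) ∧
    {k : ℕ | 1 ≤ C * a k}.Finite ∧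
    Tendsto a atTop (nhds 0) := by
  have ha0 : 0 < a 0 := by nlinarith
  -- the sequence is antitone (take λ = 0)
  have hmono : ∀ k, a (k + 1) ≤ a k := by
    intro k
    have := hrec k 0 ⟨le_refl 0, zero_le_one⟩
    simpa using this
  have hanti : Antitone a := antitone_nat_of_succ_le hmono
  set q : ℝ := 1 - 1 / (4 * C * a 0) with hq
  have hq0 : 0 ≤ q := by
    have h4 : (4:ℝ) ≤ 4 * C * a 0 := by nlinarith
    have : 1 / (4 * C * a 0) ≤ 1 / 4 := by
      apply one_div_le_one_div_of_le <;> linarith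
    rw [hq]; linarith
  have hq1 : q < 1 := by
    have : 0 < 1 / (4 * C * a 0) := by positivity
    rw [hq]; linarith
  -- Part 1
  have part1 : ∀ k, 1 ≤ C * a k → a (k + 1) ≤ q * a k := by
    intro k hk
    have hak : 0 < a k := by nlinarith
    have hCak : (1:ℝ) ≤ C * a k := hk
    set lam : ℝ := 1 / (2 * C * a k) with hlam
    have hlam0 : 0 < lam := by positivity
    have hlam1 : lam ≤ 1 := by
      rw [hlam, div_le_one (by nlinarith)]
      nlinarith
    have hb := hrec k lam ⟨le_of_lt hlam0, hlam1⟩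
    have habs : |1 - lam| = 1 - lam := abs_of_nonneg (by linarith)
    have hcomp : lam ^ 2 * C * a k = lam / 2 := by
      rw [hlam]; field_simp
    have hval : 1 - lam + lam ^ 2 * C * a k = 1 - 1 / (4 * C * a k) := by
      rw [hcomp, hlam]; ring
    have hstep : a (k + 1) ≤ a k * (1 - 1 / (4 * C * a k)) := by
      calc a (k + 1) ≤ a k * (|1 - lam| + lam ^ 2 * C * a k) := hb
        _ = a k * (1 - 1 / (4 * C * a k)) := by rw [habs, hval]
    have hle : 1 / (4 * C * a 0) ≤ 1 / (4 * C * a k) := by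
      apply one_div_le_one_div_of_le
      · nlinarith
      · have := hanti (Nat.zero_le k); nlinarith
    calc a (k + 1) ≤ a k * (1 - 1 / (4 * C * a k)) := hstep
      _ ≤ a k * q := by
          apply mul_le_mul_of_nonneg_left _ (le_of_lt hak)
          rw [hq]; linarith
      _ = q * a k := mul_comm _ _
  -- geometric decay while in the bad set
  have hgeom : ∀ k, (∀ j < k, 1 ≤ C * a j) → a k ≤ q ^ k * a 0 := by
    intro k
    induction k with
    | zero => intro _; simp
    | succ n ih =>
      intro h
      have h1 : a (n + 1) ≤ q * a n := part1 n (h n (Nat.lt_succ_self n))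
      have h2 : a n ≤ q ^ n * a 0 := ih (fun j hj => h j (hj.trans (Nat.lt_succ_self n)))
      calc a (n + 1) ≤ q * a n := h1
        _ ≤ q * (q ^ n * a 0) := by nlinarith
        _ = q ^ (n + 1) * a 0 := by ring
  -- finiteness
  have htend : Tendsto (fun k : ℕ => q ^ k * a 0) atTop (nhds 0) := by
    have := (tendsto_pow_atTop_nhds_zero_of_lt_one hq0 hq1).mul_const (a 0)
    simpa using this
  obtain ⟨N, hN⟩ := (htend.eventually (gt_mem_nhds (show (0:ℝ) < 1/C by positivity))).exists_forall_of_atTop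
  have hfin : {k : ℕ | 1 ≤ C * a k}.Finite := by
    apply Set.Finite.subset (Set.finite_Iio N)
    intro k hk
    simp only [Set.mem_setOf_eq] at hk
    by_contra hkN
    simp only [Set.mem_Iio, not_lt] at hkN
    have hall : ∀ j < k, 1 ≤ C * a j := by
      intro j hj
      have := hanti (le_of_lt hj)
      nlinarith
    have h1 := hgeom k hall
    have h2 := hN k hkN
    have : a k < 1 / C := lt_of_le_of_lt h1 h2
    rw [lt_div_iff₀ hC] at this
    nlinarith
  refine ⟨part1, hfin, ?_⟩
  -- tendsto 0
  obtain ⟨M, hM⟩ := hfin.infinite_compl.nonempty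
  simp only [Set.mem_compl_iff, Set.mem_setOf_eq, not_le] at hM
  set r : ℝ := C * a M with hr
  have hr0 : 0 ≤ r := mul_nonneg hC.le (ha M)
  have hr1 : r < 1 := hM
  have hbound : ∀ j, a (M + j) ≤ r ^ j * a M := by
    intro j
    induction j with
    | zero => simp
    | succ n ih =>
      have h1 := hrec (M + n) 1 ⟨zero_le_one, le_refl 1⟩
      simp only [sub_self, abs_zero, one_pow, one_mul, zero_add] at h1
      have h2 : C * a (M + n) ≤ r := by
        have := hanti (Nat.le_add_right M n); nlinarith
      have hne : a (M + n) ≥ 0 := ha _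
      calc a (M + n + 1) ≤ a (M + n) * (C * a (M + n)) := h1
        _ ≤ a (M + n) * r := mul_le_mul_of_nonneg_left h2 hne
        _ ≤ (r ^ n * a M) * r := mul_le_mul_of_nonneg_right ih hr0
        _ = r ^ (n + 1) * a M := by ring
  rw [← tendsto_add_atTop_iff_nat M]
  refine squeeze_zero (g := fun j => r ^ j * a M) (fun j => ha _)
    (fun j => by simpa [Nat.add_comm] using hbound j) ?_
  have := (tendsto_pow_atTop_nhds_zero_of_lt_one hr0 hr1).mul_const (a M)
  simpa using this
end

section
/- Suppose E(y_{k+1}) ≤ E(y_k)·(|1−λ| + λ² C₁√E(y_k))² for all λ ∈ [0,m] with m ≥ 1 and E(y_k) > 0 for all k, and that E(y_k)/E(y_{k+1}) satisfies E(y_{k+1})/E(y_k) → 0. Furthermore suppose 2E(y_{k+1}) = 2(1−λ_k)²E(y_k) + 2λ_k²(1−λ_k)⟨v_k, w_k⟩ + λ_k⁴‖w_k‖², where ‖v_k‖² = 2E(y_k), |⟨v_k,w_k⟩|/E(y_k) → 0, ‖w_k‖²/E(y_k) → 0, and λ_k ∈ [0,m]. Then (1−λ_k)² → 0, i.e. λ_k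 → 1. -/
open Filter Topology

/-! Solving the energy identity for `(1 - λ_k)²` writes it as `E(y_{k+1})/E(y_k)` minus
`λ_k²(1 - λ_k) · ⟨v_k, w_k⟩/E(y_k)` and `λ_k⁴/2 · ‖w_k‖²/E(y_k)`. Since `λ_k` stays in the
compact interval `[0, m]`, both coefficients are bounded, so all three terms tend to `0`. -/

theorem Filter.isBoundedUnder_norm_comp_of_forall_mem_compact {ι α E : Type*}
    [TopologicalSpace α] [SeminormedAddGroup E] {l : Filter ι} {f : α → E} {s : Set α}
    {u : ι → α} (hs : IsCompact s) (hf : ContinuousOn f s) (hu : ∀ i, u i ∈ s) :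
    IsBoundedUnder (· ≤ ·) l ((‖·‖) ∘ f ∘ u) := by
  obtain ⟨C, hC⟩ := hs.exists_bound_of_continuousOn hf
  exact isBoundedUnder_of ⟨C, fun i => hC _ (hu i)⟩

theorem tendsto_zero_of_sq_tendsto_zero {ι : Type*} {l : Filter ι} {u : ι → ℝ}
    (h : Tendsto (fun i => u i ^ 2) l (𝓝 0)) : Tendsto u l (𝓝 0) := by
  rw [tendsto_zero_iff_abs_tendsto_zero]
  simpa only [Real.sqrt_sq_eq_abs, Real.sqrt_zero, Function.comp_def] using h.sqrt

theorem sq_one_sub_eq_of_energy_identity {E E' lam a b : ℝ} (hE : E ≠ 0)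
    (h : 2 * E' = 2 * (1 - lam) ^ 2 * E + 2 * lam ^ 2 * (1 - lam) * a + lam ^ 4 * b) :
    (1 - lam) ^ 2 = E' / E - lam ^ 2 * (1 - lam) * (a / E) - lam ^ 4 / 2 * (b / E) := by
  field_simp
  linear_combination -h

theorem stmt12_general (X : Type*) [NormedAddCommGroup X] [InnerProductSpace ℝ X]
    (m : ℝ)
    (E lam : ℕ → ℝ) (v w : ℕ → X)
    (hEpos : ∀ k, 0 < E k)
    (hlam : ∀ k, lam k ∈ Set.Icc (0 : ℝ) m)
    (hratio : Tendsto (fun k => E (k + 1) / E k) atTop (nhds 0))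
    (hid : ∀ k, 2 * E (k + 1) =
      2 * (1 - lam k) ^ 2 * E k
        + 2 * (lam k) ^ 2 * (1 - lam k) * (inner ℝ (v k) (w k) : ℝ)
        + (lam k) ^ 4 * ‖w k‖ ^ 2)
    (hvw : Tendsto (fun k => |(inner ℝ (v k) (w k) : ℝ)| / E k) atTop (nhds 0))
    (hw : Tendsto (fun k => ‖w k‖ ^ 2 / E k) atTop (nhds 0)) :
    Tendsto (fun k => (1 - lam k) ^ 2) atTop (nhds 0) ∧
    Tendsto lam atTop (nhds 1) := by
  have hbounded (f : ℝ → ℝ) (hf : Continuous f) :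
      IsBoundedUnder (· ≤ ·) atTop ((‖·‖) ∘ f ∘ lam) :=
    isBoundedUnder_norm_comp_of_forall_mem_compact isCompact_Icc hf.continuousOn hlam
  have hvw' : Tendsto (fun k => (inner ℝ (v k) (w k) : ℝ) / E k) atTop (𝓝 0) := by
    rw [tendsto_zero_iff_abs_tendsto_zero]
    refine hvw.congr fun k => ?_
    simp only [Function.comp_apply, abs_div, abs_of_pos (hEpos k)]
  have hcross := isBoundedUnder_le_mul_tendsto_zero
    (hbounded (fun x => x ^ 2 * (1 - x)) (by fun_prop)) hvw'
  have hquartic := isBoundedUnder_le_mul_tendsto_zero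
    (hbounded (fun x => x ^ 4 / 2) (by fun_prop)) hw
  have hsq : Tendsto (fun k => (1 - lam k) ^ 2) atTop (𝓝 0) := by
    simpa only [sub_zero, Function.comp_apply, ← sq_one_sub_eq_of_energy_identity (hEpos _).ne' (hid _)]
      using (hratio.sub hcross).sub hquartic
  refine ⟨hsq, ?_⟩
  rw [← tendsto_sub_nhds_zero_iff]
  simpa only [neg_sub, neg_zero] using (tendsto_zero_of_sq_tendsto_zero hsq).neg

/-- Lemma 2.18 (abstract form): if `E(y_{k+1}) ≤ E(y_k)(|1-λ| + λ²C₁√E(y_k))²` for all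
`λ ∈ [0,m]` (`m ≥ 1`), `E(y_k) > 0`, `E(y_{k+1})/E(y_k) → 0`, and the algebraic
identity `2E(y_{k+1}) = 2(1-λ_k)²E(y_k) + 2λ_k²(1-λ_k)⟨v_k,w_k⟩ + λ_k⁴‖w_k‖²` holds
with `‖v_k‖² = 2E(y_k)`, `|⟨v_k,w_k⟩|/E(y_k) → 0`, `‖w_k‖²/E(y_k) → 0` and
`λ_k ∈ [0,m]`, then `(1-λ_k)² → 0`, i.e. `λ_k → 1`. -/
theorem stmt12 (X : Type*) [NormedAddCommGroup X] [InnerProductSpace ℝ X]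
    (m C₁ : ℝ) (hm : 1 ≤ m) (hC₁ : 0 < C₁)
    (E lam : ℕ → ℝ) (v w : ℕ → X)
    (hEpos : ∀ k, 0 < E k)
    (hlam : ∀ k, lam k ∈ Set.Icc (0 : ℝ) m)
    (hrec : ∀ k, ∀ l ∈ Set.Icc (0 : ℝ) m,
      E (k + 1) ≤ E k * (|1 - l| + l ^ 2 * C₁ * Real.sqrt (E k)) ^ 2)
    (hratio : Tendsto (fun k => E (k + 1) / E k) atTop (nhds 0))
    (hv : ∀ k, ‖v k‖ ^ 2 = 2 * E k)
    (hid : ∀ k, 2 * E (k + 1) =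
      2 * (1 - lam k) ^ 2 * E k
        + 2 * (lam k) ^ 2 * (1 - lam k) * (inner ℝ (v k) (w k) : ℝ)
        + (lam k) ^ 4 * ‖w k‖ ^ 2)
    (hvw : Tendsto (fun k => |(inner ℝ (v k) (w k) : ℝ)| / E k) atTop (nhds 0))
    (hw : Tendsto (fun k => ‖w k‖ ^ 2 / E k) atTop (nhds 0)) :
    Tendsto (fun k => (1 - lam k) ^ 2) atTop (nhds 0) ∧
    Tendsto lam atTop (nhds 1) :=
  stmt12_general X m E lam v w hEpos hlam hratio hid hvw hw
end

section
/- Let C₁ > 0 and let (E_k) be nonnegative reals with E_{k+1} ≤ E_k (p_k(λ))² for all λ ∈ ℝ₊, where p_k(λ) = |1−λ| + λ² C₁ √E_k. Then √E_k → 0 as k → ∞, and there exists k₀ such that for all k ≥ k₀, C₁√E_{k+1} ≤ (C₁√E_k)². -/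
open Filter

/-- Lemma 3.12: if `E_{k+1} ≤ E_k (|1-λ| + λ² C₁ √E_k)²` for all `λ ≥ 0`, then
`√E_k → 0` and the decay is eventually quadratic: there is `k₀` such that
`C₁ √E_{k+1} ≤ (C₁ √E_k)²` for all `k ≥ k₀`. -/
theorem stmt17 (C₁ : ℝ) (hC₁ : 0 < C₁) (E : ℕ → ℝ) (hE : ∀ k, 0 ≤ E k)
    (hrec : ∀ k, ∀ lam : ℝ, 0 ≤ lam →
      E (k + 1) ≤ E k * (|1 - lam| + lam ^ 2 * C₁ * Real.sqrt (E k)) ^ 2) :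
    Tendsto (fun k => Real.sqrt (E k)) atTop (nhds 0) ∧
    ∃ k₀ : ℕ, ∀ k ≥ k₀, C₁ * Real.sqrt (E (k + 1)) ≤ (C₁ * Real.sqrt (E k)) ^ 2 := by
  have hs : ∀ k, 0 ≤ Real.sqrt (E k) := fun k => Real.sqrt_nonneg _
  -- the key one-step estimate on square roots
  have key : ∀ k, ∀ lam : ℝ, 0 ≤ lam →
      Real.sqrt (E (k+1)) ≤ Real.sqrt (E k) * (|1 - lam| + lam ^ 2 * C₁ * Real.sqrt (E k)) := by
    intro k lam hlam
    have hp : 0 ≤ |1 - lam| + lam ^ 2 * C₁ * Real.sqrt (E k) := by positivity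
    calc Real.sqrt (E (k+1))
        ≤ Real.sqrt (E k * (|1 - lam| + lam ^ 2 * C₁ * Real.sqrt (E k)) ^ 2) :=
          Real.sqrt_le_sqrt (hrec k lam hlam)
      _ = Real.sqrt (E k) * (|1 - lam| + lam ^ 2 * C₁ * Real.sqrt (E k)) := by
          rw [Real.sqrt_mul (hE k), Real.sqrt_sq hp]
  -- quadratic decay from λ = 1, valid for every k
  have quad : ∀ k, C₁ * Real.sqrt (E (k + 1)) ≤ (C₁ * Real.sqrt (E k)) ^ 2 := by
    intro k
    have h := key k 1 (by norm_num)
    simp only [sub_self, abs_zero, one_pow, zero_add, one_mul] at h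
    nlinarith [hs k, hs (k+1)]
  -- monotonicity from λ = 0
  have mono1 : ∀ k, Real.sqrt (E (k+1)) ≤ Real.sqrt (E k) := by
    intro k
    have h := key k 0 (by norm_num)
    simpa using h
  have mono : ∀ k, Real.sqrt (E k) ≤ Real.sqrt (E 0) := by
    intro k
    induction k with
    | zero => exact le_refl _
    | succ n ih => exact (mono1 n).trans ih
  -- uniform linear contraction
  set M : ℝ := max (C₁ * Real.sqrt (E 0)) 1 with hMdef
  have hM1 : (1:ℝ) ≤ M := le_max_right _ _
  have hM0 : 0 < M := lt_of_lt_of_le one_pos hM1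
  set r : ℝ := 1 - 1 / (4 * M) with hrdef
  have hr0 : 0 ≤ r := by
    have : 1 / (4 * M) ≤ 1 / 4 := by
      apply one_div_le_one_div_of_le <;> linarith
    simp only [hrdef]; linarith
  have hr1 : r < 1 := by
    have : 0 < 1 / (4 * M) := by positivity
    simp only [hrdef]; linarith
  have hr34 : (3:ℝ)/4 ≤ r := by
    have : 1 / (4 * M) ≤ 1 / 4 := by
      apply one_div_le_one_div_of_le <;> linarith
    simp only [hrdef]; linarith
  have step : ∀ k, Real.sqrt (E (k+1)) ≤ r * Real.sqrt (E k) := by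
    intro k
    set a : ℝ := C₁ * Real.sqrt (E k) with hadef
    have ha0 : 0 ≤ a := by positivity
    have haM : a ≤ M := by
      have : a ≤ C₁ * Real.sqrt (E 0) :=
        mul_le_mul_of_nonneg_left (mono k) hC₁.le
      exact this.trans (le_max_left _ _)
    by_cases hcase : a < 1/2
    · -- λ = 1 : factor is a < 1/2 ≤ r
      have h := key k 1 (by norm_num)
      simp only [sub_self, abs_zero, one_pow, zero_add, one_mul, ← hadef] at h
      have har : a ≤ r := hcase.le.trans (by linarith)
      have : Real.sqrt (E k) * a ≤ r * Real.sqrt (E k) := by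
        rw [mul_comm]; exact mul_le_mul_of_nonneg_right har (hs k)
      linarith
    · -- λ = 1/(2a)
      push_neg at hcase
      have hapos : 0 < a := lt_of_lt_of_le (by norm_num) hcase
      have hlam0 : (0:ℝ) ≤ 1 / (2 * a) := by positivity
      have h := key k (1 / (2 * a)) hlam0
      have hle1 : 1 / (2 * a) ≤ 1 := by
        rw [div_le_one (by linarith)]; linarith
      have habs : |1 - 1 / (2 * a)| = 1 - 1 / (2 * a) := abs_of_nonneg (by linarith)
      have hfac : (1 / (2 * a)) ^ 2 * C₁ * Real.sqrt (E k) = 1 / (4 * a) := by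
        rw [mul_assoc, ← hadef]
        field_simp
        ring
      rw [habs, hfac] at h
      have hfacr : 1 - 1 / (2 * a) + 1 / (4 * a) ≤ r := by
        have h1 : 1 - 1 / (2 * a) + 1 / (4 * a) = 1 - 1 / (4 * a) := by
          field_simp; ring
        -- 1/(4M) ≤ 1/(4a)
        have h2 : 1 / (4 * M) ≤ 1 / (4 * a) := by
          apply one_div_le_one_div_of_le <;> linarith
        rw [h1, hrdef]; linarith
      calc Real.sqrt (E (k+1))
          ≤ Real.sqrt (E k) * (1 - 1 / (2 * a) + 1 / (4 * a)) := h
        _ ≤ Real.sqrt (E k) * r := mul_le_mul_of_nonneg_left hfacr (hs k)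
        _ = r * Real.sqrt (E k) := mul_comm _ _
  -- geometric bound
  have geom : ∀ k, Real.sqrt (E k) ≤ Real.sqrt (E 0) * r ^ k := by
    intro k
    induction k with
    | zero => simp
    | succ n ih =>
      calc Real.sqrt (E (n+1)) ≤ r * Real.sqrt (E n) := step n
        _ ≤ r * (Real.sqrt (E 0) * r ^ n) := mul_le_mul_of_nonneg_left ih hr0
        _ = Real.sqrt (E 0) * r ^ (n+1) := by ring
  constructor
  · apply squeeze_zero hs geom
    have := tendsto_pow_atTop_nhds_zero_of_lt_one hr0 hr1
    have := this.const_mul (Real.sqrt (E 0))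
    simpa using this
  · exact ⟨0, fun k _ => quad k⟩
end
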